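/- Define c₀ : ℤ⁺ → {0,1} × {0,1} by c₀(x) = (μ(x) mod 2, λ(x) mod 2). Then c₀ is computable, and for every infinite set A ⊆ ℤ⁺ that does not have weak apartness, FS^{≤2}(A) is not monochromatic under c₀. -/

import Mathlib

/-- `mu x = ⌊log₂ x⌋`, the exponent of the highest power of 2 in the binary expansion of `x`. -/
def mu (x : ℕ) : ℕ := Nat.log 2 x

/-- `lam x` is the 2-adic valuation of `x`, the exponent of the lowest power of 2
in the binary expansion of `x`. -/
def lam (x : ℕ) : ℕ := padicValNat 2 x

/-- `Bset n = B^n = {x ∈ ℤ⁺ : μ(x) = n}`. -/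
def Bset (n : ℕ) : Set ℕ := {x | 0 < x ∧ mu x = n}

/-- A set `A ⊆ ℤ⁺` has weak apartness if every `A ∩ B^m` has at most one element and
for every `l` there are at most two elements `x ∈ A` with `λ(x) = l`. -/
def WeakApart (A : Set ℕ) : Prop :=
  (∀ m, (A ∩ Bset m).Subsingleton) ∧
  (∀ l, ∀ x ∈ A, ∀ y ∈ A, ∀ z ∈ A,
    lam x = l → lam y = l → lam z = l → x = y ∨ x = z ∨ y = z)

/-- `FS A`: all finite sums of distinct elements of `A`. -/
def FS (A : Set ℕ) : Set ℕ :=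
  {n | ∃ F : Finset ℕ, ↑F ⊆ A ∧ F.Nonempty ∧ F.sum id = n}

/-- `FSle k A = FS^{≤k}(A)`: sums of at most `k` distinct elements of `A`. -/
def FSle (k : ℕ) (A : Set ℕ) : Set ℕ :=
  {n | ∃ F : Finset ℕ, ↑F ⊆ A ∧ F.Nonempty ∧ F.card ≤ k ∧ F.sum id = n}

/-- `A` is `Π⁰₃`: `x ∈ A ↔ ∀ y ∃ z ∀ w, R x y z w` for a computable relation `R`. -/
def Pi03 (A : Set ℕ) : Prop :=
  ∃ R : ℕ → ℕ → ℕ → ℕ → Bool,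
    Computable (fun p : ℕ × ℕ × ℕ × ℕ => R p.1 p.2.1 p.2.2.1 p.2.2.2) ∧
    ∀ x, x ∈ A ↔ ∀ y, ∃ z, ∀ w, R x y z w = true

/-- `A` is `Σ⁰₃`: `x ∈ A ↔ ∃ y ∀ z ∃ w, R x y z w` for a computable relation `R`. -/
def Sigma03 (A : Set ℕ) : Prop :=
  ∃ R : ℕ → ℕ → ℕ → ℕ → Bool,
    Computable (fun p : ℕ × ℕ × ℕ × ℕ => R p.1 p.2.1 p.2.2.1 p.2.2.2) ∧
    ∀ x, x ∈ A ↔ ∃ y, ∀ z, ∃ w, R x y z w = true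

/-- `A` is `Δ⁰₃` iff it is both `Σ⁰₃` and `Π⁰₃`. -/
def Delta03 (A : Set ℕ) : Prop := Sigma03 A ∧ Pi03 A

/-- The coloring $c_0(x) = (\mu(x) \bmod 2, \lambda(x) \bmod 2)$. -/
def c₀ (x : ℕ) : ℕ × ℕ := (mu x % 2, lam x % 2)

/-!
Both coordinates of `c₀` are bounded searches, hence primitive recursive. If weak apartness
fails, then either two distinct `x, y ∈ A` share `μ = m`, and then `μ(x + y) = m + 1`; or three
distinct elements share `λ = l`, so they are `2^l` times odd numbers, two of which agree mod 4,
and the sum `x + y` of the corresponding pair has `λ(x + y) = l + 1`. In both cases `x` and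
`x + y` lie in `FS^{≤2}(A)` and differ in one coordinate of `c₀`.
-/

lemma Nat.findGreatest_eq_of_forall_iff_le {P : ℕ → Prop} [DecidablePred P] {n m : ℕ}
    (hm : m ≤ n) (hP : ∀ k, P k ↔ k ≤ m) : Nat.findGreatest P n = m :=
  Nat.findGreatest_eq_iff.mpr
    ⟨hm, fun _ => (hP m).mpr le_rfl, fun _ hk _ h => absurd ((hP _).mp h) (by omega)⟩

lemma Primrec.nat_pow : Primrec₂ ((· ^ ·) : ℕ → ℕ → ℕ) :=
  Primrec₂.unpaired'.mp Nat.Primrec.pow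

lemma mu_eq_findGreatest (x : ℕ) : mu x = Nat.findGreatest (fun k => 2 ^ k ≤ x) x := by
  rcases eq_or_ne x 0 with rfl | hx
  · simp [mu]
  exact (Nat.findGreatest_eq_of_forall_iff_le (Nat.log_le_self 2 x)
    fun k => (Nat.le_log_iff_pow_le one_lt_two hx).symm).symm

lemma lam_eq_findGreatest (x : ℕ) : lam x = Nat.findGreatest (fun k => x % 2 ^ k = 0) x := by
  rcases eq_or_ne x 0 with rfl | hx
  · simp [lam]
  exact (Nat.findGreatest_eq_of_forall_iff_le (Nat.padicValNat_lt_self hx).le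
    fun k => Nat.dvd_iff_mod_eq_zero.symm.trans
      (Nat.pow_dvd_iff_le_padicValNat (by norm_num) hx)).symm

lemma primrec_mu : Primrec mu := by
  rw [funext mu_eq_findGreatest]
  exact Primrec.nat_findGreatest Primrec.id <| PrimrecRel.comp Primrec.nat_le
    (Primrec.nat_pow.comp (Primrec.const 2) Primrec.snd) Primrec.fst

lemma primrec_lam : Primrec lam := by
  rw [funext lam_eq_findGreatest]
  exact Primrec.nat_findGreatest Primrec.id <| PrimrecRel.comp Primrec.eq
    (Primrec.nat_mod.comp Primrec.fst (Primrec.nat_pow.comp (Primrec.const 2) Primrec.snd))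
    (Primrec.const 0)

lemma computable_c₀ : Computable c₀ :=
  (Primrec.pair (Primrec.nat_mod.comp primrec_mu (Primrec.const 2))
    (Primrec.nat_mod.comp primrec_lam (Primrec.const 2))).to_comp

lemma mu_add_of_mu_eq {x y : ℕ} (hx : x ≠ 0) (hy : y ≠ 0) (hxy : mu x = mu y) :
    mu (x + y) = mu x + 1 := by
  have hx₁ : 2 ^ mu x ≤ x := Nat.pow_log_le_self 2 hx
  have hx₂ : x < 2 ^ (mu x + 1) := Nat.lt_pow_succ_log_self one_lt_two x
  have hy₁ : 2 ^ mu x ≤ y := hxy ▸ Nat.pow_log_le_self 2 hy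
  have hy₂ : y < 2 ^ (mu x + 1) := hxy ▸ Nat.lt_pow_succ_log_self one_lt_two y
  refine Nat.log_eq_of_pow_le_of_lt_pow ?_ ?_ <;> rw [pow_succ] at * <;> omega

lemma lam_two_pow_mul_of_odd (k : ℕ) {c : ℕ} (hc : Odd c) : lam (2 ^ k * c) = k := by
  rw [lam, padicValNat_base_pow_mul one_lt_two hc.pos.ne',
    padicValNat.eq_zero_of_not_dvd hc.not_two_dvd_nat, zero_add]

lemma two_pow_lam_mul_odd (x : ℕ) (hx : x ≠ 0) :
    ∃ a, Odd a ∧ x = 2 ^ lam x * a :=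
  ⟨x.divMaxPow 2, Nat.odd_iff.mpr (by have := Nat.not_dvd_divMaxPow one_lt_two hx; omega),
    (Nat.pow_padicValNat_mul_divMaxPow 2 x).symm⟩

lemma lam_two_pow_mul_add_two_pow_mul {a b : ℕ} (l : ℕ) (ha : Odd a) (hb : Odd b)
    (hab : a % 4 = b % 4) : lam (2 ^ l * a + 2 ^ l * b) = l + 1 := by
  rw [Nat.odd_iff] at ha hb
  have hsum : 2 ^ l * a + 2 ^ l * b = 2 ^ (l + 1) * ((a + b) / 2) := by
    rw [← mul_add, pow_succ, mul_assoc, Nat.mul_div_cancel' (by omega)]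
  exact hsum ▸ lam_two_pow_mul_of_odd _ (Nat.odd_iff.mpr (by omega))

lemma lam_add_eq_succ_of_three {x y z l : ℕ} (hx : x ≠ 0) (hy : y ≠ 0) (hz : z ≠ 0)
    (hlx : lam x = l) (hly : lam y = l) (hlz : lam z = l) :
    lam (x + y) = l + 1 ∨ lam (x + z) = l + 1 ∨ lam (y + z) = l + 1 := by
  obtain ⟨a, ha, rfl⟩ := hlx ▸ two_pow_lam_mul_odd x hx
  obtain ⟨b, hb, rfl⟩ := hly ▸ two_pow_lam_mul_odd y hy
  obtain ⟨c, hc, rfl⟩ := hlz ▸ two_pow_lam_mul_odd z hz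
  have h4 : a % 4 = b % 4 ∨ a % 4 = c % 4 ∨ b % 4 = c % 4 := by
    rw [Nat.odd_iff] at ha hb hc; omega
  exact h4.imp (lam_two_pow_mul_add_two_pow_mul _ ha hb) <|
    Or.imp (lam_two_pow_mul_add_two_pow_mul _ ha hc) (lam_two_pow_mul_add_two_pow_mul _ hb hc)

lemma exists_mu_or_lam_add_eq_succ_of_not_weakApart {A : Set ℕ} (hA : ∀ x ∈ A, 0 < x)
    (h : ¬WeakApart A) :
    ∃ x ∈ A, ∃ y ∈ A, x ≠ y ∧ (mu (x + y) = mu x + 1 ∨ lam (x + y) = lam x + 1) := by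
  rw [WeakApart, not_and_or] at h
  rcases h with h | h
  · push Not at h
    obtain ⟨m, x, ⟨hxA, hx, hmx⟩, y, ⟨hyA, hy, hmy⟩, hxy⟩ := h
    exact ⟨x, hxA, y, hyA, hxy, .inl (mu_add_of_mu_eq hx.ne' hy.ne' (hmx.trans hmy.symm))⟩
  · push Not at h
    obtain ⟨l, x, hxA, y, hyA, z, hzA, hlx, hly, hlz, hxy, hxz, hyz⟩ := h
    rcases lam_add_eq_succ_of_three (hA x hxA).ne' (hA y hyA).ne' (hA z hzA).ne' hlx hly hlz
      with h | h | h
    exacts [⟨x, hxA, y, hyA, hxy, .inr (hlx ▸ h)⟩, ⟨x, hxA, z, hzA, hxz, .inr (hlx ▸ h)⟩,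
      ⟨y, hyA, z, hzA, hyz, .inr (hly ▸ h)⟩]

lemma mem_FSle_of_mem {A : Set ℕ} {k x : ℕ} (hk : 1 ≤ k) (hx : x ∈ A) : x ∈ FSle k A :=
  ⟨{x}, by simpa using hx, Finset.singleton_nonempty x, by simpa using hk, by simp⟩

lemma add_mem_FSle {A : Set ℕ} {k x y : ℕ} (hk : 2 ≤ k) (hx : x ∈ A) (hy : y ∈ A)
    (hxy : x ≠ y) : x + y ∈ FSle k A :=
  ⟨{x, y}, by simp [Set.insert_subset_iff, hx, hy], Finset.insert_nonempty x {y},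
    by simpa [Finset.card_pair hxy] using hk, by simp [Finset.sum_pair hxy]⟩

lemma c₀_ne_of_mu_or_lam_eq_succ {x z : ℕ} (h : mu z = mu x + 1 ∨ lam z = lam x + 1) :
    c₀ x ≠ c₀ z := by
  simp only [c₀, ne_eq, Prod.mk.injEq]
  omega

theorem stmt13 :
    Computable c₀ ∧
      ∀ A : Set ℕ, (∀ x ∈ A, 0 < x) → A.Infinite → ¬WeakApart A →
        ∃ u ∈ FSle 2 A, ∃ v ∈ FSle 2 A, c₀ u ≠ c₀ v := by
  refine ⟨computable_c₀, fun A hA _ hWA => ?_⟩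
  obtain ⟨x, hxA, y, hyA, hxy, hstep⟩ := exists_mu_or_lam_add_eq_succ_of_not_weakApart hA hWA
  exact ⟨x, mem_FSle_of_mem one_le_two hxA, x + y, add_mem_FSle le_rfl hxA hyA hxy,
    c₀_ne_of_mu_or_lam_eq_succ hstep⟩
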